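/- Define the dual Lipschitz constant L_d(O) = sup over pairs of distinct density operators ρ ≠ σ of Tr[O(ρ−σ)]/W_1^d(ρ,σ). If d is continuous and the 2-norm is Lipschitz w.r.t. d, then L_d(O) equals the supremum restricted to pure states: L_d(O) = sup_{ψ≠φ} Tr[O(|ψ⟩⟨ψ| − |φ⟩⟨φ|)] / d(ψ,φ). -/

import Mathlib

open scoped BigOperators ComplexOrder
open Matrix

noncomputable section

abbrev QV (D : ℕ) := EuclideanSpace ℂ (Fin D)

def qproj {D : ℕ} (ψ : QV D) : Matrix (Fin D) (Fin D) ℂ :=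
  Matrix.of fun i j => ψ i * (starRingEnd ℂ) (ψ j)

/-- A quantum transport plan between `ρ` and `σ`. -/
structure TPlan (D : ℕ) (ρ σ : Matrix (Fin D) (Fin D) ℂ) where
  n : ℕ
  q : Fin n → ℝ
  ψ : Fin n → QV D
  φ : Fin n → QV D
  q_pos : ∀ j, 0 < q j
  ψ_unit : ∀ j, ‖ψ j‖ = 1
  φ_unit : ∀ j, ‖φ j‖ = 1
  margL : ∑ j, (q j : ℂ) • qproj (ψ j) = ρ
  margR : ∑ j, (q j : ℂ) • qproj (φ j) = σ

/-- p-th order transport cost of a plan (before the 1/p root). -/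
def Tcost {D : ℕ} (d : QV D → QV D → ℝ) (p : ℝ) {ρ σ : Matrix (Fin D) (Fin D) ℂ}
    (Q : TPlan D ρ σ) : ℝ :=
  ∑ j, Q.q j * d (Q.ψ j) (Q.φ j) ^ p

/-- The order-p quantum Wasserstein distance. -/
def Wp {D : ℕ} (d : QV D → QV D → ℝ) (p : ℝ) (ρ σ : Matrix (Fin D) (Fin D) ℂ) : ℝ :=
  sInf { x | ∃ Q : TPlan D ρ σ, x = (Tcost d p Q) ^ (1/p) }

/-- The infinite-order quantum Wasserstein distance. -/
def Winf {D : ℕ} (d : QV D → QV D → ℝ) (ρ σ : Matrix (Fin D) (Fin D) ℂ) : ℝ :=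
  sInf { x | ∃ Q : TPlan D ρ σ, x = ⨆ j, d (Q.ψ j) (Q.φ j) }

def IsDensity {D : ℕ} (ρ : Matrix (Fin D) (Fin D) ℂ) : Prop :=
  ρ.PosSemidef ∧ ρ.trace = 1

/-- Hilbert–Schmidt (Frobenius) norm. -/
def frob {D : ℕ} (A : Matrix (Fin D) (Fin D) ℂ) : ℝ :=
  Real.sqrt (∑ i, ∑ j, ‖A i j‖ ^ 2)

/-- Action of a matrix on a vector of the Euclidean space. -/
def act {D : ℕ} (U : Matrix (Fin D) (Fin D) ℂ) (ψ : QV D) : QV D :=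
  (EuclideanSpace.equiv (Fin D) ℂ).symm (U.mulVec (EuclideanSpace.equiv (Fin D) ℂ ψ))

/-- Dual Lipschitz constant of an observable. -/
def Ld {D : ℕ} (d : QV D → QV D → ℝ) (O : Matrix (Fin D) (Fin D) ℂ) : ℝ :=
  sSup { x | ∃ ρ σ : Matrix (Fin D) (Fin D) ℂ, IsDensity ρ ∧ IsDensity σ ∧ ρ ≠ σ ∧
    x = ((O * (ρ - σ)).trace).re / Wp d 1 ρ σ }

/-- Double-dual norm. -/
def DWnorm {D : ℕ} (d : QV D → QV D → ℝ) (X : Matrix (Fin D) (Fin D) ℂ) : ℝ :=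
  sSup { x | ∃ O : Matrix (Fin D) (Fin D) ℂ, O.IsHermitian ∧ O.trace = 0 ∧ Ld d O ≤ 1 ∧
    x = ((O * X).trace).re }

/-- Trace (nuclear) norm. -/
def traceNorm {D : ℕ} (A : Matrix (Fin D) (Fin D) ℂ) : ℝ :=
  ((Matrix.posSemidef_conjTranspose_mul_self A).1.eigenvectorUnitary.1 *
    Matrix.diagonal (((↑) : ℝ → ℂ) ∘ Real.sqrt ∘ (Matrix.posSemidef_conjTranspose_mul_self A).1.eigenvalues) *
    (star (Matrix.posSemidef_conjTranspose_mul_self A).1.eigenvectorUnitary : Matrix (Fin D) (Fin D) ℂ)).trace.re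

/-!
For any transport plan `Q` between `ρ` and `σ`, `Tr[O(ρ - σ)]` is the `Q.q`-weighted sum of the
pure-state differences `Tr[O(|ψⱼ⟩⟨ψⱼ| - |φⱼ⟩⟨φⱼ|)]`, each of which is at most `M · d(ψⱼ, φⱼ)`,
where `M ≥ 0` is the pure-state supremum (swapping a pair flips the sign of the trace). Hence
`Tr[O(ρ - σ)] ≤ M · cost(Q)` for every plan, and taking the infimum over plans gives
`Tr[O(ρ - σ)] ≤ M · W₁(ρ, σ)`. Conversely, the one-pair plan shows
`W₁(|ψ⟩⟨ψ|, |φ⟩⟨φ|) ≤ d(ψ, φ)`, so each pure ratio is dominated by a density ratio. The Lipschitz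
bound `‖|ψ⟩⟨ψ| - |φ⟩⟨φ|‖₂ ≤ C d(ψ, φ)` makes both suprema finite and `W₁` positive on distinct
pure states.
-/

section Frobenius

variable {D : ℕ}

lemma frob_eq_norm_toLp_vec (A : Matrix (Fin D) (Fin D) ℂ) :
    frob A = ‖(WithLp.toLp 2 A.vec : EuclideanSpace ℂ (Fin D × Fin D))‖ := by
  rw [EuclideanSpace.norm_eq, frob, Fintype.sum_prod_type, Finset.sum_comm]
  rfl

lemma frob_nonneg (A : Matrix (Fin D) (Fin D) ℂ) : 0 ≤ frob A :=
  Real.sqrt_nonneg _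

lemma frob_conjTranspose (A : Matrix (Fin D) (Fin D) ℂ) : frob Aᴴ = frob A := by
  rw [frob, frob, Finset.sum_comm]
  simp [conjTranspose_apply]

lemma frob_pos {A : Matrix (Fin D) (Fin D) ℂ} (hA : A ≠ 0) : 0 < frob A := by
  rwa [frob_eq_norm_toLp_vec, norm_pos_iff, ne_eq, WithLp.toLp_eq_zero, vec_eq_zero_iff]

lemma frob_sum_smul_le {ι : Type*} [Fintype ι] {q : ι → ℝ} (hq : ∀ j, 0 ≤ q j)
    (X : ι → Matrix (Fin D) (Fin D) ℂ) :
    frob (∑ j, (q j : ℂ) • X j) ≤ ∑ j, q j * frob (X j) := by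
  simp only [frob_eq_norm_toLp_vec, vec_sum, vec_smul, WithLp.toLp_sum, WithLp.toLp_smul]
  refine (norm_sum_le _ _).trans_eq (Finset.sum_congr rfl fun j _ => ?_)
  rw [norm_smul, Complex.norm_real, Real.norm_of_nonneg (hq j)]

lemma re_trace_mul_le_frob_mul_frob (O X : Matrix (Fin D) (Fin D) ℂ) :
    ((O * X).trace).re ≤ frob O * frob X := by
  have hinner : (O * X).trace = inner ℂ
      (WithLp.toLp 2 Oᴴ.vec : EuclideanSpace ℂ (Fin D × Fin D)) (WithLp.toLp 2 X.vec) := by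
    rw [EuclideanSpace.inner_eq_star_dotProduct, dotProduct_comm, WithLp.ofLp_toLp,
      WithLp.ofLp_toLp, star_vec_dotProduct_vec, conjTranspose_conjTranspose]
  calc ((O * X).trace).re ≤ ‖(O * X).trace‖ := Complex.re_le_norm _
    _ ≤ frob Oᴴ * frob X := by
      rw [hinner, frob_eq_norm_toLp_vec, frob_eq_norm_toLp_vec]
      exact norm_inner_le_norm _ _
    _ = frob O * frob X := by rw [frob_conjTranspose]

end Frobenius

lemma re_trace_mul_sub_comm {D : ℕ} (O A B : Matrix (Fin D) (Fin D) ℂ) :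
    ((O * (B - A)).trace).re = -((O * (A - B)).trace).re := by
  rw [← neg_sub, Matrix.mul_neg, trace_neg, Complex.neg_re]

lemma qproj_eq_vecMulVec {D : ℕ} (ψ : QV D) : qproj ψ = vecMulVec ψ.ofLp (star ψ.ofLp) := rfl

lemma qproj_isDensity {D : ℕ} {ψ : QV D} (hψ : ‖ψ‖ = 1) : IsDensity (qproj ψ) := by
  refine ⟨posSemidef_vecMulVec_self_star _, ?_⟩
  rw [qproj_eq_vecMulVec, trace_vecMulVec, ← EuclideanSpace.inner_eq_star_dotProduct,
    inner_self_eq_norm_sq_to_K, hψ]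
  simp

namespace TPlan

variable {D : ℕ} {ρ σ : Matrix (Fin D) (Fin D) ℂ}

def single {ψ φ : QV D} (hψ : ‖ψ‖ = 1) (hφ : ‖φ‖ = 1) : TPlan D (qproj ψ) (qproj φ) where
  n := 1
  q _ := 1
  ψ _ := ψ
  φ _ := φ
  q_pos _ := one_pos
  ψ_unit _ := hψ
  φ_unit _ := hφ
  margL := by simp
  margR := by simp

lemma sub_eq_sum (Q : TPlan D ρ σ) :
    ρ - σ = ∑ j, (Q.q j : ℂ) • (qproj (Q.ψ j) - qproj (Q.φ j)) := by
  simp only [smul_sub, Finset.sum_sub_distrib, Q.margL, Q.margR]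

lemma re_trace_mul_sub (Q : TPlan D ρ σ) (O : Matrix (Fin D) (Fin D) ℂ) :
    ((O * (ρ - σ)).trace).re =
      ∑ j, Q.q j * ((O * (qproj (Q.ψ j) - qproj (Q.φ j))).trace).re := by
  simp only [Q.sub_eq_sum, Matrix.mul_sum, Matrix.mul_smul, trace_sum, trace_smul,
    Complex.re_sum, smul_eq_mul, Complex.re_ofReal_mul]

end TPlan

section Transport

variable {D : ℕ} {d : QV D → QV D → ℝ} {ρ σ : Matrix (Fin D) (Fin D) ℂ}

def LipschitzQproj (C : ℝ) (d : QV D → QV D → ℝ) : Prop :=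
  ∀ ψ φ : QV D, ‖ψ‖ = 1 → ‖φ‖ = 1 → frob (qproj ψ - qproj φ) ≤ C * d ψ φ

lemma Tcost_one (Q : TPlan D ρ σ) : Tcost d 1 Q = ∑ j, Q.q j * d (Q.ψ j) (Q.φ j) := by
  simp only [Tcost, Real.rpow_one]

lemma Wp_one_eq_iInf : Wp d 1 ρ σ = ⨅ Q : TPlan D ρ σ, Tcost d 1 Q := by
  simp only [Wp, div_one, Real.rpow_one, iInf, Set.range, eq_comm]

lemma Tcost_one_nonneg (hdnn : ∀ a b, 0 ≤ d a b) (Q : TPlan D ρ σ) : 0 ≤ Tcost d 1 Q := by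
  rw [Tcost_one]
  exact Finset.sum_nonneg fun j _ => mul_nonneg (Q.q_pos j).le (hdnn _ _)

lemma Wp_one_nonneg (hdnn : ∀ a b, 0 ≤ d a b) (ρ σ : Matrix (Fin D) (Fin D) ℂ) :
    0 ≤ Wp d 1 ρ σ := by
  rw [Wp_one_eq_iInf]
  exact Real.iInf_nonneg (Tcost_one_nonneg hdnn)

lemma Wp_one_qproj_le (hdnn : ∀ a b, 0 ≤ d a b) {ψ φ : QV D} (hψ : ‖ψ‖ = 1)
    (hφ : ‖φ‖ = 1) : Wp d 1 (qproj ψ) (qproj φ) ≤ d ψ φ := by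
  rw [Wp_one_eq_iInf]
  refine (ciInf_le ⟨0, ?_⟩ (TPlan.single hψ hφ)).trans_eq ?_
  · rintro _ ⟨Q, rfl⟩
    exact Tcost_one_nonneg hdnn Q
  · simp [Tcost_one, TPlan.single]

lemma frob_sub_le_mul_Tcost {C : ℝ} (hLip : LipschitzQproj C d) (Q : TPlan D ρ σ) :
    frob (ρ - σ) ≤ C * Tcost d 1 Q := by
  rw [Q.sub_eq_sum, Tcost_one, Finset.mul_sum]
  refine (frob_sum_smul_le (fun j => (Q.q_pos j).le) _).trans (Finset.sum_le_sum fun j _ => ?_)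
  rw [mul_left_comm]
  exact mul_le_mul_of_nonneg_left (hLip _ _ (Q.ψ_unit j) (Q.φ_unit j)) (Q.q_pos j).le

lemma frob_sub_le_mul_Wp {C : ℝ} (hC : 0 < C) (hLip : LipschitzQproj C d)
    [Nonempty (TPlan D ρ σ)] : frob (ρ - σ) ≤ C * Wp d 1 ρ σ := by
  rw [Wp_one_eq_iInf, Real.mul_iInf_of_nonneg hC.le]
  exact le_ciInf (frob_sub_le_mul_Tcost hLip)

lemma Wp_one_qproj_pos {C : ℝ} (hC : 0 < C) (hLip : LipschitzQproj C d)
    {ψ φ : QV D} (hψ : ‖ψ‖ = 1) (hφ : ‖φ‖ = 1) (hne : qproj ψ ≠ qproj φ) :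
    0 < Wp d 1 (qproj ψ) (qproj φ) := by
  have : Nonempty (TPlan D (qproj ψ) (qproj φ)) := ⟨TPlan.single hψ hφ⟩
  exact pos_of_mul_pos_right
    ((frob_pos (sub_ne_zero.mpr hne)).trans_le (frob_sub_le_mul_Wp hC hLip)) hC.le

end Transport

lemma Real.sSup_nonneg_of_forall_exists_nonneg {S : Set ℝ} (h : ∀ x ∈ S, ∃ y ∈ S, 0 ≤ y) :
    0 ≤ sSup S := by
  rcases S.eq_empty_or_nonempty with rfl | ⟨x, hx⟩
  · exact Real.sSup_empty.ge
  · exact Real.sSup_nonneg' (h x hx)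

section Ratios

variable {D : ℕ} (d : QV D → QV D → ℝ) (O : Matrix (Fin D) (Fin D) ℂ)

def densityRatios : Set ℝ :=
  { x | ∃ ρ σ : Matrix (Fin D) (Fin D) ℂ, IsDensity ρ ∧ IsDensity σ ∧ ρ ≠ σ ∧
    x = ((O * (ρ - σ)).trace).re / Wp d 1 ρ σ }

def pureRatios : Set ℝ :=
  { x | ∃ ψ φ : QV D, ‖ψ‖ = 1 ∧ ‖φ‖ = 1 ∧ qproj ψ ≠ qproj φ ∧
    x = ((O * (qproj ψ - qproj φ)).trace).re / d ψ φ }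

variable {d O}

lemma zero_le_Ld (hdnn : ∀ a b, 0 ≤ d a b) : 0 ≤ Ld d O := by
  refine Real.sSup_nonneg_of_forall_exists_nonneg ?_
  rintro _ ⟨ρ, σ, hρ, hσ, hne, rfl⟩
  rcases le_total 0 ((O * (ρ - σ)).trace).re with ht | ht
  · exact ⟨_, ⟨ρ, σ, hρ, hσ, hne, rfl⟩, div_nonneg ht (Wp_one_nonneg hdnn ρ σ)⟩
  · refine ⟨_, ⟨σ, ρ, hσ, hρ, hne.symm, rfl⟩, div_nonneg ?_ (Wp_one_nonneg hdnn σ ρ)⟩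
    rw [re_trace_mul_sub_comm]
    linarith

lemma zero_le_sSup_pureRatios (hdnn : ∀ a b, 0 ≤ d a b) : 0 ≤ sSup (pureRatios d O) := by
  refine Real.sSup_nonneg_of_forall_exists_nonneg ?_
  rintro _ ⟨ψ, φ, hψ, hφ, hne, rfl⟩
  rcases le_total 0 ((O * (qproj ψ - qproj φ)).trace).re with ht | ht
  · exact ⟨_, ⟨ψ, φ, hψ, hφ, hne, rfl⟩, div_nonneg ht (hdnn ψ φ)⟩
  · refine ⟨_, ⟨φ, ψ, hφ, hψ, hne.symm, rfl⟩, div_nonneg ?_ (hdnn φ ψ)⟩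
    rw [re_trace_mul_sub_comm]
    linarith

lemma bddAbove_pureRatios (hdnn : ∀ a b, 0 ≤ d a b) {C : ℝ} (hC : 0 < C)
    (hLip : LipschitzQproj C d) : BddAbove (pureRatios d O) := by
  refine ⟨C * frob O, ?_⟩
  rintro _ ⟨ψ, φ, hψ, hφ, -, rfl⟩
  refine div_le_of_le_mul₀ (hdnn ψ φ) (mul_nonneg hC.le (frob_nonneg O)) ?_
  calc ((O * (qproj ψ - qproj φ)).trace).re ≤ frob O * frob (qproj ψ - qproj φ) :=
        re_trace_mul_le_frob_mul_frob _ _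
    _ ≤ frob O * (C * d ψ φ) := mul_le_mul_of_nonneg_left (hLip ψ φ hψ hφ) (frob_nonneg O)
    _ = C * frob O * d ψ φ := by ring

lemma re_trace_mul_qproj_sub_le_sSup_mul (hdnn : ∀ a b, 0 ≤ d a b) {C : ℝ} (hC : 0 < C)
    (hLip : LipschitzQproj C d) {ψ φ : QV D} (hψ : ‖ψ‖ = 1) (hφ : ‖φ‖ = 1) :
    ((O * (qproj ψ - qproj φ)).trace).re ≤ sSup (pureRatios d O) * d ψ φ := by
  by_cases hne : qproj ψ = qproj φ
  · simpa [hne] using mul_nonneg (zero_le_sSup_pureRatios hdnn) (hdnn ψ φ)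
  have hd : 0 < d ψ φ :=
    (Wp_one_qproj_pos hC hLip hψ hφ hne).trans_le (Wp_one_qproj_le hdnn hψ hφ)
  rw [← div_le_iff₀ hd]
  exact le_csSup (bddAbove_pureRatios hdnn hC hLip) ⟨ψ, φ, hψ, hφ, hne, rfl⟩

lemma re_trace_mul_sub_le_sSup_mul_Tcost (hdnn : ∀ a b, 0 ≤ d a b) {C : ℝ} (hC : 0 < C)
    (hLip : LipschitzQproj C d) {ρ σ : Matrix (Fin D) (Fin D) ℂ} (Q : TPlan D ρ σ) :
    ((O * (ρ - σ)).trace).re ≤ sSup (pureRatios d O) * Tcost d 1 Q := by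
  rw [Q.re_trace_mul_sub, Tcost_one, Finset.mul_sum]
  refine Finset.sum_le_sum fun j _ => ?_
  rw [mul_left_comm]
  exact mul_le_mul_of_nonneg_left
    (re_trace_mul_qproj_sub_le_sSup_mul hdnn hC hLip (Q.ψ_unit j) (Q.φ_unit j)) (Q.q_pos j).le

lemma re_trace_mul_sub_div_Wp_le_sSup (hdnn : ∀ a b, 0 ≤ d a b) {C : ℝ} (hC : 0 < C)
    (hLip : LipschitzQproj C d) (ρ σ : Matrix (Fin D) (Fin D) ℂ) :
    ((O * (ρ - σ)).trace).re / Wp d 1 ρ σ ≤ sSup (pureRatios d O) := by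
  have hM := zero_le_sSup_pureRatios (O := O) hdnn
  rcases isEmpty_or_nonempty (TPlan D ρ σ) with hQ | hQ
  · -- without plans `Wp` is the junk value `sInf ∅ = 0`, so the ratio is `0`
    rw [Wp_one_eq_iInf, Real.iInf_of_isEmpty, div_zero]
    exact hM
  refine div_le_of_le_mul₀ (Wp_one_nonneg hdnn ρ σ) hM ?_
  rw [Wp_one_eq_iInf, Real.mul_iInf_of_nonneg hM]
  exact le_ciInf (re_trace_mul_sub_le_sSup_mul_Tcost hdnn hC hLip)

lemma pureRatio_le_Ld (hdnn : ∀ a b, 0 ≤ d a b) {C : ℝ} (hC : 0 < C)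
    (hLip : LipschitzQproj C d) (hbdd : BddAbove (densityRatios d O)) {x : ℝ}
    (hx : x ∈ pureRatios d O) : x ≤ Ld d O := by
  obtain ⟨ψ, φ, hψ, hφ, hne, rfl⟩ := hx
  rcases le_total ((O * (qproj ψ - qproj φ)).trace).re 0 with ht | ht
  · exact (div_nonpos_of_nonpos_of_nonneg ht (hdnn ψ φ)).trans (zero_le_Ld hdnn)
  refine le_csSup_of_le hbdd ⟨_, _, qproj_isDensity hψ, qproj_isDensity hφ, hne, rfl⟩ ?_
  exact div_le_div_of_nonneg_left ht (Wp_one_qproj_pos hC hLip hψ hφ hne)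
    (Wp_one_qproj_le hdnn hψ hφ)

end Ratios

theorem dual_lipschitz_on_pure_states_general {D : ℕ} (d : QV D → QV D → ℝ)
    (hdnn : ∀ a b : QV D, 0 ≤ d a b)
    (C : ℝ) (hC : 0 < C)
    (hLip : ∀ ψ φ : QV D, ‖ψ‖ = 1 → ‖φ‖ = 1 → frob (qproj ψ - qproj φ) ≤ C * d ψ φ)
    (O : Matrix (Fin D) (Fin D) ℂ) :
    Ld d O = sSup { x | ∃ ψ φ : QV D, ‖ψ‖ = 1 ∧ ‖φ‖ = 1 ∧ qproj ψ ≠ qproj φ ∧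
        x = ((O * (qproj ψ - qproj φ)).trace).re / d ψ φ } := by
  have hdens : ∀ x ∈ densityRatios d O, x ≤ sSup (pureRatios d O) := by
    rintro _ ⟨ρ, σ, -, -, -, rfl⟩
    exact re_trace_mul_sub_div_Wp_le_sSup hdnn hC hLip ρ σ
  refine le_antisymm (Real.sSup_le hdens (zero_le_sSup_pureRatios hdnn)) ?_
  exact Real.sSup_le (fun x => pureRatio_le_Ld hdnn hC hLip ⟨_, hdens⟩) (zero_le_Ld hdnn)

/-- The dual Lipschitz constant is attained on pure states. -/
theorem dual_lipschitz_on_pure_states {D : ℕ} (d : QV D → QV D → ℝ)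
    (hdnn : ∀ a b : QV D, 0 ≤ d a b)
    (hdph : ∀ a b a' b' : QV D, qproj a = qproj a' → qproj b = qproj b' → d a b = d a' b')
    (hdcont : Continuous fun x : QV D × QV D => d x.1 x.2)
    (C : ℝ) (hC : 0 < C)
    (hLip : ∀ ψ φ : QV D, ‖ψ‖ = 1 → ‖φ‖ = 1 → frob (qproj ψ - qproj φ) ≤ C * d ψ φ)
    (O : Matrix (Fin D) (Fin D) ℂ) (hO : O.IsHermitian) :
    Ld d O = sSup { x | ∃ ψ φ : QV D, ‖ψ‖ = 1 ∧ ‖φ‖ = 1 ∧ qproj ψ ≠ qproj φ ∧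
        x = ((O * (qproj ψ - qproj φ)).trace).re / d ψ φ } :=
  dual_lipschitz_on_pure_states_general d hdnn C hC hLip O
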